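/- Consider the second-order differential operator (K^S f)(x) = (μx − x³) f'(x) + (σ²/2) f''(x) on smooth functions on ℝ in the deterministic limit σ = 0: (K^S f)(x) = (μx − x³) f'(x) with μ < 0. Then for each nonnegative integer n, the function φₙ(x) = (x/√(x² + |μ|))^n satisfies K^S φₙ = nμ φₙ on ℝ. -/

import Mathlib

/-! Writing `c = |μ| = -μ`, the function `g x = x / √(x² + c)` has `g' = c / (x² + c)^(3/2)`, and the
drift `-c x - x³ = -x (x² + c)` cancels the factor `x² + c`, so `g` is an eigenfunction of the
first-order generator with eigenvalue `-c = μ`. Since the generator is a derivation, `gⁿ` is an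
eigenfunction with eigenvalue `n μ`. -/

open Real

theorem mul_deriv_pow_eq_of_hasDerivAt {𝕜 : Type*} [NontriviallyNormedField 𝕜] {g : 𝕜 → 𝕜}
    {g' a l x : 𝕜} (hg : HasDerivAt g g' x) (h : a * g' = l * g x) (n : ℕ) :
    a * deriv (fun y => g y ^ n) x = n * l * g x ^ n := by
  rw [(hg.fun_pow n).deriv]
  rcases n with _ | m
  · simp
  · calc a * ((m + 1 : ℕ) * g x ^ (m + 1 - 1) * g') = (m + 1 : ℕ) * g x ^ m * (a * g') := by
          rw [Nat.add_sub_cancel]; ring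
      _ = (m + 1 : ℕ) * l * g x ^ (m + 1) := by rw [h]; ring

theorem hasDerivAt_div_sqrt_sq_add {c x : ℝ} (hpos : 0 < x ^ 2 + c) :
    HasDerivAt (fun y => y / √(y ^ 2 + c)) (c / ((x ^ 2 + c) * √(x ^ 2 + c))) x := by
  have hsqrt : 0 < √(x ^ 2 + c) := sqrt_pos.mpr hpos
  have hsq : √(x ^ 2 + c) ^ 2 = x ^ 2 + c := sq_sqrt hpos.le
  have hroot : HasDerivAt (fun y => √(y ^ 2 + c)) (2 * x / (2 * √(x ^ 2 + c))) x := by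
    simpa using ((hasDerivAt_pow 2 x).add_const c).sqrt hpos.ne'
  refine ((hasDerivAt_id' x).fun_div hroot hsqrt.ne').congr_deriv ?_
  field_simp
  rw [hsq]
  ring

theorem neg_mul_sub_pow_three_mul_div_sqrt {c x : ℝ} (hpos : 0 < x ^ 2 + c) :
    (-c * x - x ^ 3) * (c / ((x ^ 2 + c) * √(x ^ 2 + c))) = -c * (x / √(x ^ 2 + c)) := by
  have hsqrt : 0 < √(x ^ 2 + c) := sqrt_pos.mpr hpos
  field_simp
  ring

theorem stmt12 (μ : ℝ) (hμ : μ < 0) (n : ℕ) :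
    ∀ x : ℝ,
      (μ * x - x ^ 3) * deriv (fun y : ℝ => (y / Real.sqrt (y ^ 2 + |μ|)) ^ n) x =
        (n : ℝ) * μ * (x / Real.sqrt (x ^ 2 + |μ|)) ^ n := by
  intro x
  have hpos : 0 < x ^ 2 + |μ| := add_pos_of_nonneg_of_pos (sq_nonneg x) (abs_pos.mpr hμ.ne)
  have hμc : μ = -|μ| := by rw [abs_of_neg hμ, neg_neg]
  refine mul_deriv_pow_eq_of_hasDerivAt (hasDerivAt_div_sqrt_sq_add hpos) ?_ n
  simpa only [← hμc] using neg_mul_sub_pow_three_mul_div_sqrt hpos
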